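/- Let A be a filtered commutative ring with decreasing filtration A = F^0 ⊇ F^1 ⊇ ... ⊇ F^{d+1} = 0 by ideals, and operators T_r : A → A (r = q, q+1, ..., d) preserving each F^j, such that for every j and x ∈ F^j one has T_j(x) − c_j x ∈ F^{j+1} for nonzero integers c_j. Then for x ∈ F^q_alt of an a priori coarser filtration satisfying the same almost-eigenvalue property, one obtains (c_d · c_{d-1} ⋯ c_q) x ∈ F^q whenever x can be iteratively corrected; concretely, in the setting of the paper: for a regular noetherian separated scheme S of finite dimension d and q ≥ 1, (d−1)!·(d−2)!⋯(q−1)! · Fil^q_top K₀(S) ⊆ Fil^q_γ K₀(S). -/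

import Mathlib

/-!
Downward induction on `q`: for `x ∈ Ftop^q` the error `z = γ^q(x) − c_q x` lies one step
deeper, so by induction `P z ∈ Fgam^{q+1}` with `P = c_{q+1} ⋯ c_d`, and then
`c_q P x = P γ^q(x) − P z ∈ Fgam^q`. The induction starts at `q = d + 1`, where
`Ftop^{d+1} = 0`. Here `c_q = (−1)^{q−1} (q−1)!`, and the sign does not affect membership.
-/

open Finset Nat

theorem prod_Icc_factorial_pred {q : ℕ} (hq : 1 ≤ q) (d : ℕ) :
    ∏ j ∈ Icc q d, (j - 1)! = ∏ j ∈ Icc (q - 1) (d - 1), j ! := by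
  obtain ⟨q, rfl⟩ := Nat.exists_eq_add_of_le' hq
  cases d with
  | zero => rcases q with _ | q <;> simp
  | succ d => rw [← map_add_right_Icc q d 1, prod_map]; simp

theorem AddSubgroup.neg_one_pow_zsmul_mem_iff {M : Type*} [AddCommGroup M] (H : AddSubgroup M)
    (n : ℕ) {x : M} : ((-1 : ℤ) ^ n) • x ∈ H ↔ x ∈ H := by
  rcases neg_one_pow_eq_or ℤ n with h | h <;> simp [h]

theorem prod_zsmul_mem_of_sub_zsmul_mem {M : Type*} [AddCommGroup M]
    (F G : ℕ → AddSubgroup M) (T : ℕ → M → M) (c : ℕ → ℤ) (d q : ℕ)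
    (hF : Antitone F) (hG : ∀ r, G (r + 1) ≤ G r) (hF_vanish : F (d + 1) = ⊥)
    (hT_sub : ∀ r, q ≤ r → ∀ x ∈ F r, T r x - c r • x ∈ F (r + 1))
    (hT_mem : ∀ r, q ≤ r → ∀ x ∈ F r, T r x ∈ G r) :
    ∀ x ∈ F q, (∏ j ∈ Icc q d, c j) • x ∈ G q := by
  intro x hx
  by_cases hqd : d < q
  · have hx0 : x ∈ (⊥ : AddSubgroup M) := hF_vanish ▸ hF hqd hx
    rw [AddSubgroup.mem_bot.mp hx0, smul_zero]
    exact zero_mem _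
  set P := ∏ j ∈ Icc (q + 1) d, c j
  have hz : P • (T q x - c q • x) ∈ G q :=
    hG q <| prod_zsmul_mem_of_sub_zsmul_mem F G T c d (q + 1) hF hG hF_vanish
      (fun r hr => hT_sub r (by omega)) (fun r hr => hT_mem r (by omega)) _
      (hT_sub q le_rfl x hx)
  have hTx : P • T q x ∈ G q := zsmul_mem (hT_mem q le_rfl x hx) P
  have hsplit : ∏ j ∈ Icc q d, c j = c q * P := by
    rw [← mul_prod_Ioc_eq_prod_Icc (by omega), ← Icc_add_one_left_eq_Ioc]
  have hdiff : (c q * P) • x = P • T q x - P • (T q x - c q • x) := by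
    rw [smul_sub, smul_smul, mul_comm, sub_sub_cancel]
  rw [hsplit, hdiff]
  exact sub_mem hTx hz
termination_by d + 1 - q

/-- concrete form, as in the paper. Let `K₀(S)` (abstractly: a
commutative ring `A`) carry a decreasing coniveau filtration `Ftop` with
`Ftop^{d+1} = 0` (`S` of finite dimension `d`) and a decreasing γ-filtration `Fgam`,
with γ-operations satisfying, for `q ≥ 1` and `x ∈ Ftop^q`:
(a) `γ^q(x) − (−1)^{q−1}(q−1)!·x ∈ Ftop^{q+1}` and (b) `γ^q(x) ∈ Fgam^q`.
Then for every `q ≥ 1`,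
`(d−1)!·(d−2)!⋯(q−1)! · Ftop^q ⊆ Fgam^q`. -/
theorem factorial_multiple_of_coniveau_in_gamma
    {A : Type*} [CommRing A] (d : ℕ)
    (Ftop Fgam : ℕ → AddSubgroup A) (gam : ℕ → A → A)
    (htop_anti : ∀ r, Ftop (r + 1) ≤ Ftop r)
    (hgam_anti : ∀ r, Fgam (r + 1) ≤ Fgam r)
    (htop_vanish : Ftop (d + 1) = ⊥)
    (ha : ∀ r, 1 ≤ r → ∀ x ∈ Ftop r,
      gam r x - ((-1 : ℤ) ^ (r - 1) * (r - 1).factorial) • x ∈ Ftop (r + 1))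
    (hb : ∀ r, 1 ≤ r → ∀ x ∈ Ftop r, gam r x ∈ Fgam r)
    (q : ℕ) (hq : 1 ≤ q) (x : A) (hx : x ∈ Ftop q) :
    (∏ j ∈ Finset.Icc (q - 1) (d - 1), Nat.factorial j) • x ∈ Fgam q := by
  have h := prod_zsmul_mem_of_sub_zsmul_mem Ftop Fgam gam
    (fun r => (-1 : ℤ) ^ (r - 1) * (r - 1)!) d q (antitone_nat_of_succ_le htop_anti) hgam_anti
    htop_vanish (fun r hr => ha r (hq.trans hr)) (fun r hr => hb r (hq.trans hr)) x hx
  rwa [prod_mul_distrib, prod_pow_eq_pow_sum, mul_smul, AddSubgroup.neg_one_pow_zsmul_mem_iff,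
    ← Nat.cast_prod, prod_Icc_factorial_pred hq, natCast_zsmul] at h
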